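/- Let G and G′ be finite groups with supercharacter theories C = (𝒳,𝒦) and C′ = (𝒳′,𝒦′). Then G × G′ is (C × C′)-quasi-monomial if and only if G is C-quasi-monomial and G′ is C′-quasi-monomial. -/

import Mathlib

open scoped Classical BigOperators

noncomputable def cInd {G : Type} [Group G] [Fintype G] (H : Subgroup G)
    (f : H → ℂ) : G → ℂ := fun g =>
  (Nat.card H : ℂ)⁻¹ *
    ∑ x : G, if h : x⁻¹ * g * x ∈ H then f ⟨x⁻¹ * g * x, h⟩ else 0

noncomputable def cInner (G : Type) [Group G] [Fintype G] (φ ψ : G → ℂ) : ℂ :=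
  (Nat.card G : ℂ)⁻¹ * ∑ g : G, φ g * starRingEnd ℂ (ψ g)

/-- `χ` is the character of some finite-dimensional complex representation of `G`. -/
def IsChar (G : Type) [Group G] (χ : G → ℂ) : Prop :=
  ∃ V : FDRep ℂ G, FDRep.character V = χ

/-- `χ` is the character of some irreducible complex representation of `G`. -/
def IsIrrChar (G : Type) [Group G] (χ : G → ℂ) : Prop :=
  ∃ V : FDRep ℂ G, CategoryTheory.Simple V ∧ FDRep.character V = χ

/-- `χ` is a constituent of `θ`: their inner product is nonzero. -/
def IsConstituent {G : Type} [Group G] [Fintype G] (χ θ : G → ℂ) : Prop :=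
  cInner G θ χ ≠ 0

def charKer {G : Type} [Group G] (χ : G → ℂ) : Set G := {g | χ g = χ 1}

/-- The supercharacter attached to a set `X` of irreducible characters. -/
noncomputable def superchar {G : Type} [Group G] (X : Set (G → ℂ)) : G → ℂ :=
  fun g => ∑ᶠ ψ ∈ X, ψ 1 * ψ g

def Monomial (G : Type) [Group G] [Fintype G] : Prop :=
  ∀ χ : G → ℂ, IsIrrChar G χ →
    ∃ (H : Subgroup G) (lam : H →* ℂ), cInd H (fun h => lam h) = χ

def QuasiMonomial (G : Type) [Group G] [Fintype G] : Prop :=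
  ∀ χ : G → ℂ, IsIrrChar G χ →
    ∃ (H : Subgroup G) (lam : H →* ℂ) (d : ℕ), 0 < d ∧
      cInd H (fun h => lam h) = fun g => (d : ℂ) * χ g

def AlmostMonomial (G : Type) [Group G] [Fintype G] : Prop :=
  ∀ χ ψ : G → ℂ, IsIrrChar G χ → IsIrrChar G ψ → χ ≠ ψ →
    ∃ (H : Subgroup G) (lam : H →* ℂ),
      IsConstituent χ (cInd H (fun h => lam h)) ∧
      ¬ IsConstituent ψ (cInd H (fun h => lam h))

/-- A supercharacter theory of a finite group `G` (Diaconis–Isaacs). -/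
structure SCTheory (G : Type) [Group G] where
  XX : Set (Set (G → ℂ))
  KK : Set (Set G)
  XX_nonempty : ∀ X ∈ XX, X.Nonempty
  XX_disj : ∀ X ∈ XX, ∀ Y ∈ XX, X ≠ Y → Disjoint X Y
  XX_cover : ⋃₀ XX = {χ | IsIrrChar G χ}
  KK_nonempty : ∀ K ∈ KK, K.Nonempty
  KK_disj : ∀ K ∈ KK, ∀ L ∈ KK, K ≠ L → Disjoint K L
  KK_cover : ⋃₀ KK = Set.univ
  one_mem : ({1} : Set G) ∈ KK
  card_eq : Nat.card XX = Nat.card KK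
  const : ∀ X ∈ XX, ∀ K ∈ KK, ∀ g ∈ K, ∀ g' ∈ K, superchar X g = superchar X g'

def CQuasiMonomial {G : Type} [Group G] [Fintype G] (C : SCTheory G) : Prop :=
  ∀ X ∈ C.XX, ∃ (t : ℕ) (H : Fin t → Subgroup G) (lam : ∀ i, (H i) →* ℂ) (d : ℕ),
    0 < d ∧
    (∑ i, cInd (H i) (fun h => lam i h)) = fun g => (d : ℂ) * superchar X g

def CAlmostMonomial {G : Type} [Group G] [Fintype G] (C : SCTheory G) : Prop :=
  ∀ Xk ∈ C.XX, ∀ Xl ∈ C.XX, Xk ≠ Xl →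
    ∃ (t : ℕ) (H : Fin t → Subgroup G) (lam : ∀ i, (H i) →* ℂ)
      (α : Set (G → ℂ) → ℕ),
      0 < α Xk ∧ α Xl = 0 ∧
      (∑ i, cInd (H i) (fun h => lam i h)) =
        fun g => ∑ᶠ X ∈ C.XX, (α X : ℂ) * superchar X g

/-- `N` is `C`-normal: a union of superclasses. -/
def CNormal {G : Type} [Group G] (C : SCTheory G) (N : Subgroup G) : Prop :=
  ∃ S ⊆ C.KK, (N : Set G) = ⋃₀ S

/-- `Cq` is the supercharacter theory induced by `C` on `G ⧸ N`. -/
def IsQuotientTheory {G : Type} [Group G] (C : SCTheory G)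
    (N : Subgroup G) [N.Normal] (Cq : SCTheory (G ⧸ N)) : Prop :=
  Cq.XX = {Y | ∃ X ∈ C.XX, (∀ χ ∈ X, ∀ n ∈ N, χ n = χ 1) ∧
      Y = {χ' : G ⧸ N → ℂ | (fun g : G => χ' (g : G ⧸ N)) ∈ X}} ∧
  Cq.KK = {K' | ∃ K ∈ C.KK, K' = (fun g : G => (g : G ⧸ N)) '' K}

/-- The part `X × X'` of `Irr(G × G')`, via external products of characters. -/
def prodPart {G G' : Type} (X : Set (G → ℂ)) (X' : Set (G' → ℂ)) :
    Set (G × G' → ℂ) :=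
  {χ | ∃ φ ∈ X, ∃ ψ ∈ X', χ = fun p => φ p.1 * ψ p.2}

/-- `Cp` is the product supercharacter theory `C × C'` on `G × G'`. -/
def IsProdTheory {G G' : Type} [Group G] [Group G'] (C : SCTheory G)
    (C' : SCTheory G') (Cp : SCTheory (G × G')) : Prop :=
  Cp.XX = {S | ∃ X ∈ C.XX, ∃ X' ∈ C'.XX, S = prodPart X X'} ∧
  Cp.KK = {S | ∃ K ∈ C.KK, ∃ K' ∈ C'.KK, S = K ×ˢ K'}

/-!
Call a function on `G` a monomial sum if it is a sum of characters induced from linear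
characters; then `G` is `C`-quasi-monomial iff each supercharacter `σ_X` has a positive integer
multiple that is a monomial sum. Monomial sums are closed under external products, because
`Ind_H λ × Ind_{H'} λ' = Ind_{H × H'} (λ × λ')`; since `σ_{X × X'} = σ_X × σ_{X'}`, this gives
quasi-monomiality of `G × G'` from that of the factors. Conversely, restriction to `G × 1` preserves
monomial sums: by a Mackey-type count, `Ind_H^{G × G'} λ` restricts to `[G' : π₂ H]` copies of
`Ind_{H ∩ G} λ`. It sends `σ_{X × X'}` to `σ_{X'}(1) • σ_X`, and `σ_{X'}(1)` is a positive
integer. The second factor is handled in the same way through the swap `G × G' ≃* G' × G`.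
-/
section Characters

variable {G : Type} [Group G] [Fintype G]

noncomputable def charForm : LinearMap.BilinForm ℂ (G → ℂ) :=
  LinearMap.mk₂ ℂ (fun φ ψ => (Nat.card G : ℂ)⁻¹ * ∑ g, φ g * ψ g⁻¹)
    (fun _ _ _ => by simp only [Pi.add_apply, add_mul, Finset.sum_add_distrib, mul_add])
    (fun _ _ _ => by
      simp only [Pi.smul_apply, smul_eq_mul, Finset.mul_sum]
      exact Finset.sum_congr rfl fun _ _ => by ring)
    (fun _ _ _ => by simp only [Pi.add_apply, mul_add, Finset.sum_add_distrib])
    (fun _ _ _ => by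
      simp only [Pi.smul_apply, smul_eq_mul, Finset.mul_sum]
      exact Finset.sum_congr rfl fun _ _ => by ring)

theorem charForm_apply (φ ψ : G → ℂ) :
    charForm φ ψ = (Nat.card G : ℂ)⁻¹ * ∑ g, φ g * ψ g⁻¹ := rfl

theorem charForm_character (V W : FDRep ℂ G) [CategoryTheory.Simple V]
    [CategoryTheory.Simple W] :
    charForm V.character W.character = if Nonempty (V ≅ W) then 1 else 0 := by
  have : Invertible (Nat.card G : ℂ) := invertibleOfNonzero (by exact_mod_cast Nat.card_pos.ne')
  rw [charForm_apply, FDRep.char_orthonormal]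

theorem IsIrrChar.charForm_self {χ : G → ℂ} (hχ : IsIrrChar G χ) : charForm χ χ = 1 := by
  obtain ⟨V, _, rfl⟩ := hχ
  rw [charForm_character, if_pos ⟨CategoryTheory.Iso.refl V⟩]

theorem IsIrrChar.charForm_eq_zero {χ ψ : G → ℂ} (hχ : IsIrrChar G χ) (hψ : IsIrrChar G ψ)
    (hne : χ ≠ ψ) : charForm χ ψ = 0 := by
  obtain ⟨V, _, rfl⟩ := hχ
  obtain ⟨W, _, rfl⟩ := hψ
  rw [charForm_character, if_neg fun ⟨i⟩ => hne (FDRep.char_iso i)]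

theorem setFinite_isIrrChar : {χ : G → ℂ | IsIrrChar G χ}.Finite :=
  LinearIndependent.setFinite <| LinearMap.BilinForm.linearIndependent_of_iIsOrtho
    (B := charForm) (fun χ ψ hne => χ.2.charForm_eq_zero ψ.2 (Subtype.coe_injective.ne hne))
    fun χ => χ.2.charForm_self ▸ one_ne_zero

theorem IsIrrChar.exists_apply_one_eq_nat {χ : G → ℂ} (hχ : IsIrrChar G χ) :
    ∃ n : ℕ, 0 < n ∧ χ 1 = n := by
  obtain ⟨V, hV, rfl⟩ := id hχ
  refine ⟨Module.finrank ℂ V, Nat.pos_of_ne_zero fun h => ?_, FDRep.char_one V⟩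
  have : Subsingleton V := Module.finrank_zero_iff.mp h
  have hzero : V.character = 0 := funext fun g => by
    simp [FDRep.character, Subsingleton.elim (V.ρ g) 0]
  simpa [hzero] using hχ.charForm_self

theorem IsIrrChar.apply_one_ne_zero {χ : G → ℂ} (hχ : IsIrrChar G χ) : χ 1 ≠ 0 := by
  obtain ⟨n, hn, h⟩ := hχ.exists_apply_one_eq_nat
  rw [h]; exact_mod_cast hn.ne'

end Characters

section ExternalProduct

variable {G G' : Type} [Group G] [Fintype G] [Group G'] [Fintype G']

theorem IsIrrChar.eq_of_extProd_eq {φ φ' : G → ℂ} {ψ ψ' : G' → ℂ} (hφ : IsIrrChar G φ)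
    (hφ' : IsIrrChar G φ') (hψ : IsIrrChar G' ψ) (hψ' : IsIrrChar G' ψ')
    (h : (fun p : G × G' => φ p.1 * ψ p.2) = fun p => φ' p.1 * ψ' p.2) : φ = φ' ∧ ψ = ψ' := by
  have hprop : φ = (ψ' 1 / ψ 1) • φ' := funext fun g => by
    rw [Pi.smul_apply, smul_eq_mul, div_mul_eq_mul_div, eq_div_iff hψ.apply_one_ne_zero,
      mul_comm (ψ' 1)]
    exact congrFun h (g, 1)
  -- A nonzero multiple of `φ'` pairs nontrivially with `φ'`, so it cannot be another irreducible.
  have hφφ' : φ = φ' := by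
    by_contra hne
    have h0 := hφ.charForm_eq_zero hφ' hne
    rw [hprop, map_smul, LinearMap.smul_apply, hφ'.charForm_self, smul_eq_mul, mul_one,
      div_eq_zero_iff] at h0
    exact h0.elim hψ'.apply_one_ne_zero hψ.apply_one_ne_zero
  subst hφφ'
  exact ⟨rfl, funext fun g' => mul_left_cancel₀ hφ.apply_one_ne_zero (congrFun h (1, g'))⟩

theorem superchar_prodPart {X : Set (G → ℂ)} {X' : Set (G' → ℂ)}
    (hX : ∀ χ ∈ X, IsIrrChar G χ) (hX' : ∀ χ ∈ X', IsIrrChar G' χ) (g : G) (g' : G') :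
    superchar (prodPart X X') (g, g') = superchar X g * superchar X' g' := by
  have hXf : X.Finite := setFinite_isIrrChar.subset hX
  have hX'f : X'.Finite := setFinite_isIrrChar.subset hX'
  let e : (G → ℂ) × (G' → ℂ) → (G × G' → ℂ) := fun q p => q.1 p.1 * q.2 p.2
  have himg : prodPart X X' = e '' X ×ˢ X' := by
    ext χ
    simp only [prodPart, e, Set.mem_image, Set.mem_ofPred_eq, Set.mem_prod, Prod.exists]
    constructor
    · rintro ⟨φ, hφ, ψ, hψ, rfl⟩; exact ⟨φ, ψ, ⟨hφ, hψ⟩, rfl⟩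
    · rintro ⟨φ, ψ, ⟨hφ, hψ⟩, rfl⟩; exact ⟨φ, hφ, ψ, hψ, rfl⟩
  have hinj : Set.InjOn e (X ×ˢ X') := fun ⟨φ, ψ⟩ ⟨hφ, hψ⟩ ⟨φ', ψ'⟩ ⟨hφ', hψ'⟩ h =>
    Prod.ext_iff.mpr ((hX φ hφ).eq_of_extProd_eq (hX φ' hφ') (hX' ψ hψ) (hX' ψ' hψ') h)
  simp only [superchar]
  rw [himg, finsum_mem_image hinj, ← hXf.coe_toFinset, ← hX'f.coe_toFinset, ← Finset.coe_product,
    finsum_mem_coe_finset, finsum_mem_coe_finset, finsum_mem_coe_finset, Finset.sum_product,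
    Finset.sum_mul_sum]
  refine Finset.sum_congr rfl fun φ _ => Finset.sum_congr rfl fun ψ _ => ?_
  simp only [e, Prod.fst_one, Prod.snd_one]
  ring

end ExternalProduct

theorem exists_superchar_one_eq_nat {G : Type} [Group G] [Fintype G] {X : Set (G → ℂ)}
    (hX : ∀ χ ∈ X, IsIrrChar G χ) (hne : X.Nonempty) : ∃ m : ℕ, 0 < m ∧ superchar X 1 = m := by
  choose! n hn using fun χ (hχ : χ ∈ X) => (hX χ hχ).exists_apply_one_eq_nat
  have hXf : X.Finite := setFinite_isIrrChar.subset hX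
  refine ⟨∑ χ ∈ hXf.toFinset, n χ * n χ, Finset.sum_pos (fun χ hχ => ?_) (by simpa using hne), ?_⟩
  · have := (hn χ (hXf.mem_toFinset.mp hχ)).1
    positivity
  · simp only [superchar]
    rw [finsum_mem_eq_finite_toFinset_sum _ hXf, Nat.cast_sum]
    refine Finset.sum_congr rfl fun χ hχ => ?_
    rw [(hn χ (hXf.mem_toFinset.mp hχ)).2]
    push_cast
    ring

namespace SCTheory

variable {G : Type} [Group G]

theorem isIrrChar_of_mem (C : SCTheory G) {X : Set (G → ℂ)} (hX : X ∈ C.XX) :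
    ∀ χ ∈ X, IsIrrChar G χ := fun _ hχ => by
  have := C.XX_cover ▸ Set.mem_sUnion_of_mem hχ hX
  exact this

theorem nonempty_XX [Finite G] (C : SCTheory G) : C.XX.Nonempty := by
  have hKK : 0 < Nat.card C.KK := Nat.card_pos_iff.mpr ⟨⟨⟨{1}, C.one_mem⟩⟩, inferInstance⟩
  rw [← C.card_eq] at hKK
  exact Set.nonempty_coe_sort.mp (Nat.card_pos_iff.mp hKK).1

end SCTheory

section MonomialSums

variable (G : Type) [Group G] [Fintype G]

def monomialSums : AddSubmonoid (G → ℂ) :=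
  AddSubmonoid.closure {φ | ∃ (H : Subgroup G) (lam : H →* ℂ), cInd H (fun h => lam h) = φ}

variable {G}

theorem cInd_mem_monomialSums (H : Subgroup G) (lam : H →* ℂ) :
    cInd H (fun h => lam h) ∈ monomialSums G :=
  AddSubmonoid.subset_closure ⟨H, lam, rfl⟩

theorem mem_monomialSums_iff {φ : G → ℂ} : φ ∈ monomialSums G ↔
    ∃ (t : ℕ) (H : Fin t → Subgroup G) (lam : ∀ i, H i →* ℂ),
      ∑ i, cInd (H i) (fun h => lam i h) = φ := by
  constructor
  · intro hφ
    obtain ⟨l, hl, rfl⟩ := AddSubmonoid.exists_list_of_mem_closure hφ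
    choose H lam hlam using fun i : Fin l.length => hl _ (l.get_mem i)
    refine ⟨l.length, H, lam, ?_⟩
    simp_rw [hlam, ← Fin.sum_ofFn, List.ofFn_get]
  · rintro ⟨t, H, lam, rfl⟩
    exact sum_mem fun i _ => cInd_mem_monomialSums (H i) (lam i)

theorem cQuasiMonomial_iff (C : SCTheory G) :
    CQuasiMonomial C ↔ ∀ X ∈ C.XX, ∃ d : ℕ, 0 < d ∧ d • superchar X ∈ monomialSums G := by
  have hsmul : ∀ (d : ℕ) (X : Set (G → ℂ)), d • superchar X = fun g => (d : ℂ) * superchar X g :=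
    fun d X => funext fun g => nsmul_eq_mul d (superchar X g)
  simp only [CQuasiMonomial, hsmul, mem_monomialSums_iff]
  exact forall₂_congr fun X _ =>
    ⟨fun ⟨t, H, lam, d, hd, h⟩ => ⟨d, hd, t, H, lam, h⟩,
      fun ⟨d, hd, t, H, lam, h⟩ => ⟨t, H, lam, d, hd, h⟩⟩

theorem comp_mem_monomialSums {K : Type} [Group K] [Fintype K] {f : G → K}
    (hf : ∀ (H : Subgroup K) (lam : H →* ℂ),
      (fun g => cInd H (fun h => lam h) (f g)) ∈ monomialSums G)
    {Φ : K → ℂ} (hΦ : Φ ∈ monomialSums K) : (fun g => Φ (f g)) ∈ monomialSums G := by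
  induction hΦ using AddSubmonoid.closure_induction with
  | mem Φ hΦ =>
    obtain ⟨H, lam, rfl⟩ := hΦ
    exact hf H lam
  | zero => exact zero_mem _
  | add Φ Ψ _ _ hΦ hΨ => exact add_mem hΦ hΨ

end MonomialSums

section Products

variable {G G' : Type} [Group G] [Fintype G] [Group G'] [Fintype G']

theorem cInd_prod {H : Subgroup G} {H' : Subgroup G'} (f : H → ℂ) (f' : H' → ℂ) (g : G)
    (g' : G') :
    cInd (H.prod H') (fun h => f (H.prodEquiv H' h).1 * f' (H.prodEquiv H' h).2) (g, g') =
      cInd H f g * cInd H' f' g' := by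
  have hcard : Nat.card (H.prod H') = Nat.card H * Nat.card H' := by
    rw [Nat.card_congr (H.prodEquiv H').toEquiv, Nat.card_prod]
  unfold cInd
  rw [hcard, Nat.cast_mul, mul_inv, mul_mul_mul_comm, Finset.sum_mul_sum, Fintype.sum_prod_type]
  congr 1
  refine Finset.sum_congr rfl fun x _ => Finset.sum_congr rfl fun x' _ => ?_
  by_cases hx : x⁻¹ * g * x ∈ H <;> by_cases hx' : x'⁻¹ * g' * x' ∈ H' <;>
    simp [Prod.inv_mk, Prod.mk_mul_mk, Subgroup.mem_prod, hx, hx']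
  rfl

theorem extProd_mem_monomialSums {φ : G → ℂ} {ψ : G' → ℂ} (hφ : φ ∈ monomialSums G)
    (hψ : ψ ∈ monomialSums G') : (fun p : G × G' => φ p.1 * ψ p.2) ∈ monomialSums (G × G') := by
  obtain ⟨t, H, lam, rfl⟩ := mem_monomialSums_iff.mp hφ
  obtain ⟨t', H', lam', rfl⟩ := mem_monomialSums_iff.mp hψ
  let mu : ∀ i j, (H i).prod (H' j) →* ℂ := fun i j =>
    ((lam i).coprod (lam' j)).comp ((H i).prodEquiv (H' j)).toMonoidHom
  have hsum : (fun p : G × G' => (∑ i, cInd (H i) (fun h => lam i h)) p.1 *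
      (∑ j, cInd (H' j) (fun h => lam' j h)) p.2) =
      ∑ i, ∑ j, cInd ((H i).prod (H' j)) (fun h => mu i j h) := by
    funext p
    simp only [Finset.sum_apply, Finset.sum_mul_sum, ← cInd_prod]
    rfl
  rw [hsum]
  exact sum_mem fun i _ => sum_mem fun j _ => cInd_mem_monomialSums _ (mu i j)

end Products

theorem card_eq_card_comap_inl_mul_card_map_snd {G G' : Type} [Group G] [Group G']
    (H : Subgroup (G × G')) :
    Nat.card H =
      Nat.card (H.comap (MonoidHom.inl G G')) * Nat.card (H.map (MonoidHom.snd G G')) := by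
  let f : H →* G' := (MonoidHom.snd G G').comp H.subtype
  have hker : f.ker ≃ H.comap (MonoidHom.inl G G') :=
    { toFun := fun x => ⟨x.1.1.1, (Prod.ext rfl x.2.symm : (x.1.1.1, (1 : G')) = x.1.1) ▸ x.1.2⟩
      invFun := fun g => ⟨⟨(g.1, 1), g.2⟩, rfl⟩
      left_inv := fun x => Subtype.ext (Subtype.ext (Prod.ext rfl x.2.symm))
      right_inv := fun _ => rfl }
  rw [← f.ker.card_mul_index, Subgroup.index_ker f, Nat.card_congr hker, MonoidHom.range_comp,
    Subgroup.range_subtype]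

section Restriction

variable {G G' : Type} [Group G] [Fintype G] [Group G'] [Fintype G']

theorem cInd_apply_inl (H : Subgroup (G × G')) (f : H → ℂ) (g : G) :
    cInd H f (g, 1) = (H.map (MonoidHom.snd G G')).index *
      cInd (H.comap (MonoidHom.inl G G'))
        (fun h => f ((MonoidHom.inl G G').subgroupComap H h)) g := by
  let F : G → ℂ := fun a => if h : a⁻¹ * g * a ∈ H.comap (MonoidHom.inl G G') then
    f ((MonoidHom.inl G G').subgroupComap H ⟨_, h⟩) else 0
  have hterm : ∀ x : G × G', (if h : x⁻¹ * (g, 1) * x ∈ H then f ⟨_, h⟩ else 0) = F x.1 := by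
    intro x
    have hconj : x⁻¹ * (g, 1) * x = (x.1⁻¹ * g * x.1, 1) := Prod.ext rfl (by simp)
    dsimp only [F]
    by_cases h : x.1⁻¹ * g * x.1 ∈ H.comap (MonoidHom.inl G G')
    · rw [dif_pos (by rw [hconj]; exact h), dif_pos h]
      exact congrArg f (Subtype.ext hconj)
    · rw [dif_neg (by rwa [hconj] : x⁻¹ * (g, 1) * x ∉ H), dif_neg h]
  have hsum : ∑ x : G × G', (if h : x⁻¹ * (g, 1) * x ∈ H then f ⟨_, h⟩ else 0) =
      Nat.card G' * ∑ a, F a := by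
    rw [Fintype.sum_congr _ _ hterm, Fintype.sum_prod_type, Finset.mul_sum]
    simp only [Finset.sum_const, Finset.card_univ, nsmul_eq_mul, Nat.card_eq_fintype_card]
  -- `|G'| / |H| = [G' : π₂ H] / |H ∩ G|`
  have hcard := card_eq_card_comap_inl_mul_card_map_snd H
  have hindex := (H.map (MonoidHom.snd G G')).card_mul_index
  unfold cInd
  rw [hsum, ← hindex, hcard]
  have hcomap : (Nat.card (H.comap (MonoidHom.inl G G')) : ℂ) ≠ 0 := by
    exact_mod_cast Nat.card_pos.ne'
  have hmap : (Nat.card (H.map (MonoidHom.snd G G')) : ℂ) ≠ 0 := by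
    exact_mod_cast Nat.card_pos.ne'
  push_cast
  field_simp
  rfl

theorem cInd_apply_mulEquiv {K : Type} [Group K] [Fintype K] (e : G ≃* K) (H : Subgroup K)
    (f : H → ℂ) (g : G) :
    cInd H f (e g) =
      cInd (H.comap e.toMonoidHom) (fun h => f (e.toMonoidHom.subgroupComap H h)) g := by
  have hcard : Nat.card (H.comap e.toMonoidHom) = Nat.card H :=
    Nat.card_congr ((e.subgroupMap _).toEquiv.trans
      (Equiv.setCongr (by simpa using Set.image_preimage_eq (H : Set K) e.surjective)))
  unfold cInd
  rw [hcard, ← Equiv.sum_comp e.toEquiv]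
  congr 1
  refine Finset.sum_congr rfl fun x _ => ?_
  simp only [MulEquiv.toEquiv_eq_coe, EquivLike.coe_coe, ← map_inv, ← map_mul]
  rfl

theorem comp_inl_mem_monomialSums {Φ : G × G' → ℂ} (hΦ : Φ ∈ monomialSums (G × G')) :
    (fun g => Φ (g, 1)) ∈ monomialSums G :=
  comp_mem_monomialSums (K := G × G') (f := fun g => (g, 1)) (fun H lam => by
    have hres : (fun g => cInd H (fun h => lam h) (g, 1)) = (H.map (MonoidHom.snd G G')).index •
        cInd (H.comap (MonoidHom.inl G G'))
          (fun h => lam.comp ((MonoidHom.inl G G').subgroupComap H) h) :=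
      funext fun g => by rw [cInd_apply_inl, Pi.smul_apply, nsmul_eq_mul]; rfl
    rw [hres]
    exact AddSubmonoid.nsmul_mem _ (cInd_mem_monomialSums _ _) _) hΦ

theorem comp_mulEquiv_mem_monomialSums {K : Type} [Group K] [Fintype K] (e : G ≃* K)
    {Φ : K → ℂ} (hΦ : Φ ∈ monomialSums K) : (fun g => Φ (e g)) ∈ monomialSums G :=
  comp_mem_monomialSums (K := K) (f := e) (fun H lam => by
    simp_rw [cInd_apply_mulEquiv e]
    exact cInd_mem_monomialSums _ (lam.comp (e.toMonoidHom.subgroupComap H))) hΦ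

theorem comp_inr_mem_monomialSums {Φ : G × G' → ℂ} (hΦ : Φ ∈ monomialSums (G × G')) :
    (fun g' => Φ (1, g')) ∈ monomialSums G' :=
  comp_inl_mem_monomialSums (comp_mulEquiv_mem_monomialSums (MulEquiv.prodComm) hΦ)

end Restriction

section ProductTheory

variable {G G' : Type} [Group G] [Fintype G] [Group G'] [Fintype G']
  {X : Set (G → ℂ)} {X' : Set (G' → ℂ)}

theorem nsmul_superchar_prodPart_mem {d d' : ℕ} (hX : ∀ χ ∈ X, IsIrrChar G χ)
    (hX' : ∀ χ ∈ X', IsIrrChar G' χ) (h : d • superchar X ∈ monomialSums G)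
    (h' : d' • superchar X' ∈ monomialSums G') :
    (d * d') • superchar (prodPart X X') ∈ monomialSums (G × G') := by
  convert extProd_mem_monomialSums h h' using 1
  funext p
  simp only [Pi.smul_apply, nsmul_eq_mul, superchar_prodPart hX hX' p.1 p.2]
  push_cast
  ring

theorem exists_nsmul_superchar_mem_of_prodPart_fst {d : ℕ} (hd : 0 < d)
    (hX : ∀ χ ∈ X, IsIrrChar G χ) (hX' : ∀ χ ∈ X', IsIrrChar G' χ) (hX'ne : X'.Nonempty)
    (h : d • superchar (prodPart X X') ∈ monomialSums (G × G')) :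
    ∃ e : ℕ, 0 < e ∧ e • superchar X ∈ monomialSums G := by
  obtain ⟨m, hm, hm1⟩ := exists_superchar_one_eq_nat hX' hX'ne
  refine ⟨d * m, by positivity, ?_⟩
  convert comp_inl_mem_monomialSums h using 1
  funext g
  simp only [Pi.smul_apply, nsmul_eq_mul, superchar_prodPart hX hX' g 1, hm1]
  push_cast
  ring

theorem exists_nsmul_superchar_mem_of_prodPart_snd {d : ℕ} (hd : 0 < d)
    (hX : ∀ χ ∈ X, IsIrrChar G χ) (hX' : ∀ χ ∈ X', IsIrrChar G' χ) (hXne : X.Nonempty)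
    (h : d • superchar (prodPart X X') ∈ monomialSums (G × G')) :
    ∃ e : ℕ, 0 < e ∧ e • superchar X' ∈ monomialSums G' := by
  obtain ⟨m, hm, hm1⟩ := exists_superchar_one_eq_nat hX hXne
  refine ⟨d * m, by positivity, ?_⟩
  convert comp_inr_mem_monomialSums h using 1
  funext g'
  simp only [Pi.smul_apply, nsmul_eq_mul, superchar_prodPart hX hX' 1 g', hm1]
  push_cast
  ring

end ProductTheory

/-- Theorem 2.8: `G × G'` is `C × C'`-quasi-monomial iff `G` is `C`-quasi-monomial
and `G'` is `C'`-quasi-monomial. -/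
theorem cQuasiMonomial_prod (G G' : Type) [Group G] [Fintype G]
    [Group G'] [Fintype G'] (C : SCTheory G) (C' : SCTheory G')
    (Cp : SCTheory (G × G')) (hp : IsProdTheory C C' Cp) :
    CQuasiMonomial Cp ↔ (CQuasiMonomial C ∧ CQuasiMonomial C') := by
  simp only [cQuasiMonomial_iff, hp.1, Set.mem_ofPred_eq, forall_exists_index, and_imp]
  constructor
  · intro h
    refine ⟨fun X hX => ?_, fun X' hX' => ?_⟩
    · obtain ⟨X', hX'⟩ := C'.nonempty_XX
      obtain ⟨d, hd, hmem⟩ := h _ X hX X' hX' rfl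
      exact exists_nsmul_superchar_mem_of_prodPart_fst hd (C.isIrrChar_of_mem hX)
        (C'.isIrrChar_of_mem hX') (C'.XX_nonempty X' hX') hmem
    · obtain ⟨X, hX⟩ := C.nonempty_XX
      obtain ⟨d, hd, hmem⟩ := h _ X hX X' hX' rfl
      exact exists_nsmul_superchar_mem_of_prodPart_snd hd (C.isIrrChar_of_mem hX)
        (C'.isIrrChar_of_mem hX') (C.XX_nonempty X hX) hmem
  · rintro ⟨h, h'⟩ _ X hX X' hX' rfl
    obtain ⟨d, hd, hmem⟩ := h X hX
    obtain ⟨d', hd', hmem'⟩ := h' X' hX'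
    exact ⟨d * d', Nat.mul_pos hd hd',
      nsmul_superchar_prodPart_mem (C.isIrrChar_of_mem hX) (C'.isIrrChar_of_mem hX') hmem hmem'⟩
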